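/- Triangle inequality for d_c at cusp-free-reachable endpoints (Theorem 3, Eq. (dho)): Assume the cost function C is antipodally symmetric. Suppose there exist representatives q₀ ∈ [p₀], q₁ ∈ [p₁] and a curve γ ∈ Γ₀⁺(q₀,q₁) ∪ Γ₀⁻(q₀,q₁) with L(γ) = d_proj([p₀],[p₁]). Then for every class [p₂] in the projective line bundle one has d_c([p₀],[p₁]) ≤ d_c([p₀],[p₂]) + d_c([p₂],[p₁]). -/

import Mathlib

open Set MeasureTheory
open scoped ENNReal

noncomputable section

/-- The orientation vector `n(θ) = (cos θ, sin θ)`. -/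
def nvec (θ : ℝ) : ℝ × ℝ := (Real.cos θ, Real.sin θ)

/-- Euclidean dot product on `ℝ × ℝ`. -/
def dot (a b : ℝ × ℝ) : ℝ := a.1 * b.1 + a.2 * b.2

/-- Euclidean norm on `ℝ × ℝ`. -/
def enorm2 (v : ℝ × ℝ) : ℝ := Real.sqrt (v.1 ^ 2 + v.2 ^ 2)

/-- A point of the space of positions and orientations: a position in `ℝ²`
together with an orientation vector in `ℝ²` (intended to be a unit vector). -/
abbrev Pt := (ℝ × ℝ) × (ℝ × ℝ)

/-- The antipode `p̄ = (x, -n)` of a point `p = (x, n)`. -/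
def antipode (p : Pt) : Pt := (p.1, -p.2)

/-- A candidate curve, given by a spatial part `x` and an angular part `θ`. -/
structure Curve where
  x : ℝ → ℝ × ℝ
  th : ℝ → ℝ

/-- A map is piecewise continuously differentiable on `[0,1]`: it is continuous
on `[0,1]` and, off a finite set, differentiable with continuous derivative. -/
def PiecewiseC1 {E : Type*} [NormedAddCommGroup E] [NormedSpace ℝ E] (f : ℝ → E) : Prop :=
  ContinuousOn f (Icc 0 1) ∧
    ∃ s : Finset ℝ, ∀ t ∈ Icc (0 : ℝ) 1 \ (s : Set ℝ),
      DifferentiableAt ℝ f t ∧ ContinuousAt (deriv f) t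

namespace Curve

/-- Both components of the curve are piecewise `C¹`. -/
def Admissible (γ : Curve) : Prop := PiecewiseC1 γ.x ∧ PiecewiseC1 γ.th

/-- The spatial control `u¹(t) = ẋ(t) ⬝ n(θ(t))`. -/
def u1 (γ : Curve) (t : ℝ) : ℝ := dot (deriv γ.x t) (nvec (γ.th t))

/-- The angular control `u³(t) = θ̇(t)`. -/
def u3 (γ : Curve) (t : ℝ) : ℝ := deriv γ.th t

/-- Horizontality: wherever the spatial derivative exists,
`ẋ(t) ∈ span {n(θ(t))}`. -/
def Horizontal (γ : Curve) : Prop :=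
  ∀ t ∈ Icc (0 : ℝ) 1, DifferentiableAt ℝ γ.x t →
    ∃ c : ℝ, deriv γ.x t = c • nvec (γ.th t)

/-- Boundary conditions: the curve joins `p₀` to `p₁` (the angular boundary
conditions hold modulo `2π`, which is expressed via the orientation vectors). -/
def Joins (γ : Curve) (p₀ p₁ : Pt) : Prop :=
  γ.x 0 = p₀.1 ∧ γ.x 1 = p₁.1 ∧ nvec (γ.th 0) = p₀.2 ∧ nvec (γ.th 1) = p₁.2

end Curve

/-- The length `L(γ) = ∫₀¹ C(x(t), n(θ(t))) √(ξ² u¹(t)² + u³(t)²) dt`. -/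
def length (ξ : ℝ) (C : Pt → ℝ) (γ : Curve) : ℝ :=
  ∫ t in (0 : ℝ)..1,
    C (γ.x t, nvec (γ.th t)) * Real.sqrt (ξ ^ 2 * γ.u1 t ^ 2 + γ.u3 t ^ 2)

/-- `Γ₀(p₀,p₁)`: horizontal admissible candidate curves from `p₀` to `p₁`. -/
def Gamma0 (p₀ p₁ : Pt) : Set Curve :=
  {γ | γ.Admissible ∧ γ.Horizontal ∧ γ.Joins p₀ p₁}

/-- `Γ₀⁺(p₀,p₁)`: members of `Γ₀(p₀,p₁)` with `u¹ ≥ 0` wherever defined. -/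
def Gamma0plus (p₀ p₁ : Pt) : Set Curve :=
  {γ ∈ Gamma0 p₀ p₁ | ∀ t ∈ Icc (0 : ℝ) 1, DifferentiableAt ℝ γ.x t → 0 ≤ γ.u1 t}

/-- `Γ₀⁻(p₀,p₁)`: members of `Γ₀(p₀,p₁)` with `u¹ ≤ 0` wherever defined. -/
def Gamma0minus (p₀ p₁ : Pt) : Set Curve :=
  {γ ∈ Gamma0 p₀ p₁ | ∀ t ∈ Icc (0 : ℝ) 1, DifferentiableAt ℝ γ.x t → γ.u1 t ≤ 0}

/-- The sub-Riemannian distance `d_F₀` (with `inf ∅ = +∞`). -/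
def dF0 (ξ : ℝ) (C : Pt → ℝ) (p₀ p₁ : Pt) : ℝ≥0∞ :=
  ⨅ γ ∈ Gamma0 p₀ p₁, ENNReal.ofReal (length ξ C γ)

/-- The forward (asymmetric) Finsler distance `d_F₀⁺` (with `inf ∅ = +∞`). -/
def dF0plus (ξ : ℝ) (C : Pt → ℝ) (p₀ p₁ : Pt) : ℝ≥0∞ :=
  ⨅ γ ∈ Gamma0plus p₀ p₁, ENNReal.ofReal (length ξ C γ)

/-- The backward Finsler distance `d_F₀⁻` (with `inf ∅ = +∞`). -/
def dF0minus (ξ : ℝ) (C : Pt → ℝ) (p₀ p₁ : Pt) : ℝ≥0∞ :=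
  ⨅ γ ∈ Gamma0minus p₀ p₁, ENNReal.ofReal (length ξ C γ)

/-- The cusp-free model `d_c` on the projective line bundle:
the minimum of `d_F₀⁺` over representatives `q₀ ∈ [p₀] = {p₀, p̄₀}` and
`q₁ ∈ [p₁] = {p₁, p̄₁}`. -/
def dc (ξ : ℝ) (C : Pt → ℝ) (p₀ p₁ : Pt) : ℝ≥0∞ :=
  min (min (dF0plus ξ C p₀ p₁) (dF0plus ξ C p₀ (antipode p₁)))
      (min (dF0plus ξ C (antipode p₀) p₁) (dF0plus ξ C (antipode p₀) (antipode p₁)))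

/-- The projective line bundle model `d_proj`:
the minimum of `d_F₀` over representatives of the classes. -/
def dproj (ξ : ℝ) (C : Pt → ℝ) (p₀ p₁ : Pt) : ℝ≥0∞ :=
  min (min (dF0 ξ C p₀ p₁) (dF0 ξ C p₀ (antipode p₁)))
      (min (dF0 ξ C (antipode p₀) p₁) (dF0 ξ C (antipode p₀) (antipode p₁)))

/-- `Γᶜ([p₀],[p₁])`: curves between representatives of the two classes whose
spatial control has a constant sign (nonnegative or nonpositive everywhere). -/
def GammaC (p₀ p₁ : Pt) : Set Curve :=
  (Gamma0plus p₀ p₁ ∪ Gamma0minus p₀ p₁) ∪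
  (Gamma0plus p₀ (antipode p₁) ∪ Gamma0minus p₀ (antipode p₁)) ∪
  (Gamma0plus (antipode p₀) p₁ ∪ Gamma0minus (antipode p₀) p₁) ∪
  (Gamma0plus (antipode p₀) (antipode p₁) ∪ Gamma0minus (antipode p₀) (antipode p₁))

/-- The cost function `C` is antipodally symmetric. -/
def AntipodallySymmetric (C : Pt → ℝ) : Prop :=
  ∀ x n : ℝ × ℝ, C (x, n) = C (x, -n)

/-- Distance on the circle: `ρ(θ₀, θ₁) = min_{k ∈ ℤ} |θ₁ - θ₀ + 2πk|`. -/
def rho (θ₀ θ₁ : ℝ) : ℝ :=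
  sInf (Set.range fun k : ℤ => |θ₁ - θ₀ + 2 * Real.pi * k|)

/-!
Shifting the angle by `π` maps a horizontal curve from `q₀` to `q₁` onto one from `q̄₀` to `q̄₁`,
reverses the sign of `u¹` and, `C` being antipodally symmetric, keeps its length. So a minimizer
for `d_proj` with `u¹ ≤ 0` can be turned into one with `u¹ ≥ 0`, which gives
`d_c([p₀],[p₁]) ≤ d_proj([p₀],[p₁])`. Concatenating curves makes `d_F₀` satisfy the triangle
inequality, and with the same flip so does `d_proj`; finally `d_proj ≤ d_c` everywhere.
-/

open Topology

section Calculus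

variable {E : Type*} [NormedAddCommGroup E] [NormedSpace ℝ E]

def C1At (f : ℝ → E) (t : ℝ) : Prop := DifferentiableAt ℝ f t ∧ ContinuousAt (deriv f) t

theorem deriv_comp_mul_add (f : ℝ → E) (a b t : ℝ) :
    deriv (fun s => f (a * s + b)) t = a • deriv f (a * t + b) := by
  simpa only [deriv_comp_add_const] using deriv_comp_mul_left a (fun u => f (u + b)) t

theorem C1At.congr {f g : ℝ → E} {t : ℝ} (hf : C1At f t) (h : f =ᶠ[𝓝 t] g) : C1At g t :=
  ⟨h.differentiableAt_iff.1 hf.1, hf.2.congr h.deriv⟩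

theorem C1At.comp_mul_add {f : ℝ → E} {a b t : ℝ} (hf : C1At f (a * t + b)) :
    C1At (fun s => f (a * s + b)) t := by
  refine ⟨hf.1.comp t (by fun_prop), ?_⟩
  rw [show deriv (fun s => f (a * s + b)) = fun s => a • deriv f (a * s + b) from
    funext (deriv_comp_mul_add f a b)]
  exact (hf.2.comp (f := fun s => a * s + b) (by fun_prop)).const_smul a

theorem c1At_of_eventuallyEq_const {f : ℝ → E} {t : ℝ} {c : E} (h : f =ᶠ[𝓝 t] fun _ => c) :
    C1At f t :=
  C1At.congr ⟨differentiableAt_const c, by simpa only [deriv_const'] using continuousAt_const⟩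
    h.symm

theorem DifferentiableAt.deriv_eq_zero_of_eqOn_const {f : ℝ → E} {s : Set ℝ} {t : ℝ} {c : E}
    (hd : DifferentiableAt ℝ f t) (hs : UniqueDiffWithinAt ℝ s t) (ht : t ∈ s)
    (hf : EqOn f (fun _ => c) s) : deriv f t = 0 := by
  rw [← hd.derivWithin hs, derivWithin_congr hf (hf ht)]
  exact congrFun (derivWithin_const (c := c) s) t

theorem PiecewiseC1.add_const {f : ℝ → ℝ} (hf : PiecewiseC1 f) (c : ℝ) :
    PiecewiseC1 (fun t => f t + c) := by
  obtain ⟨hcont, s, hs⟩ := hf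
  refine ⟨hcont.add continuousOn_const, s, fun t ht => ?_⟩
  rw [deriv_add_const']
  exact ⟨(hs t ht).1.add_const c, (hs t ht).2⟩

end Calculus

section Glue

variable {α : Type*}

/-- The rest at `f 1` on `[1/4, 3/4]` makes the derivative vanish at the junctions wherever it
exists, so that gluing horizontal curves gives a horizontal curve. -/
def glue (f g : ℝ → α) (t : ℝ) : α :=
  if t ≤ 1 / 4 then f (4 * t) else if t ≤ 3 / 4 then f 1 else g (4 * t - 3)

variable (f g : ℝ → α)

theorem glue_zero : glue f g 0 = f 0 := by norm_num [glue]

theorem glue_one : glue f g 1 = g 1 := by norm_num [glue]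

theorem glue_eventuallyEq_left {t : ℝ} (ht : t < 1 / 4) :
    glue f g =ᶠ[𝓝 t] fun s => f (4 * s + 0) := by
  filter_upwards [Iio_mem_nhds ht] with s hs
  rw [glue, if_pos (mem_Iio.1 hs).le, add_zero]

theorem glue_eqOn_mid : EqOn (glue f g) (fun _ => f 1) (Icc (1 / 4) (3 / 4)) := by
  rintro s ⟨h1, h2⟩
  rcases h1.eq_or_lt with rfl | h1
  · norm_num [glue]
  · rw [glue, if_neg (not_le.2 h1), if_pos h2]

theorem glue_eventuallyEq_mid {t : ℝ} (h1 : 1 / 4 < t) (h2 : t < 3 / 4) :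
    glue f g =ᶠ[𝓝 t] fun s => f (0 * s + 1) := by
  filter_upwards [Ioo_mem_nhds h1 h2] with s hs
  simpa using glue_eqOn_mid f g (Ioo_subset_Icc_self hs)

theorem glue_eventuallyEq_right {t : ℝ} (ht : 3 / 4 < t) :
    glue f g =ᶠ[𝓝 t] fun s => g (4 * s + -3) := by
  filter_upwards [Ioi_mem_nhds ht] with s hs
  have h1 : ¬ s ≤ 1 / 4 := by linarith [mem_Ioi.1 hs]
  rw [glue, if_neg h1, if_neg (not_le.2 (mem_Ioi.1 hs)), sub_eq_add_neg]

theorem glue_continuousOn {E : Type*} [TopologicalSpace E] {f g : ℝ → E}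
    (hf : ContinuousOn f (Icc 0 1)) (hg : ContinuousOn g (Icc 0 1)) (hfg : f 1 = g 0) :
    ContinuousOn (glue f g) (Icc 0 1) := by
  have hleft : ContinuousOn (glue f g) (Icc 0 (1 / 4)) := by
    refine (hf.comp (continuous_const_mul (4 : ℝ)).continuousOn ?_).congr ?_
    · rintro s ⟨h0, h1⟩
      constructor <;> linarith
    · rintro s ⟨-, h1⟩
      rw [glue, if_pos h1, Function.comp_apply]
  have hmid : ContinuousOn (glue f g) (Icc (1 / 4) (3 / 4)) :=
    continuousOn_const.congr (glue_eqOn_mid f g)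
  have hright : ContinuousOn (glue f g) (Icc (3 / 4) 1) := by
    refine (hg.comp (by fun_prop : Continuous fun s : ℝ => 4 * s - 3).continuousOn ?_).congr ?_
    · rintro s ⟨h0, h1⟩
      constructor <;> linarith
    · rintro s ⟨h0, -⟩
      rcases h0.eq_or_lt with rfl | h0
      · rw [glue_eqOn_mid f g ⟨by norm_num, le_rfl⟩]
        norm_num [hfg]
      · have h1 : ¬ s ≤ 1 / 4 := by linarith
        rw [glue, if_neg h1, if_neg (not_le.2 h0), Function.comp_apply]
  have hsplit : Icc (0 : ℝ) 1 = Icc 0 (1 / 4) ∪ (Icc (1 / 4) (3 / 4) ∪ Icc (3 / 4) 1) := by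
    rw [Icc_union_Icc_eq_Icc, Icc_union_Icc_eq_Icc] <;> norm_num
  rw [hsplit]
  exact hleft.union_of_isClosed (hmid.union_of_isClosed hright isClosed_Icc isClosed_Icc)
    isClosed_Icc (isClosed_Icc.union isClosed_Icc)

theorem PiecewiseC1.glue {E : Type*} [NormedAddCommGroup E] [NormedSpace ℝ E] {f g : ℝ → E}
    (hf : PiecewiseC1 f) (hg : PiecewiseC1 g) (hfg : f 1 = g 0) : PiecewiseC1 (glue f g) := by
  obtain ⟨hfc, s₁, hs₁⟩ := hf
  obtain ⟨hgc, s₂, hs₂⟩ := hg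
  refine ⟨glue_continuousOn hfc hgc hfg,
    {1 / 4, 3 / 4} ∪ s₁.image (· / 4) ∪ s₂.image (fun u => (u + 3) / 4), ?_⟩
  rintro t ⟨⟨ht0, ht1⟩, hts⟩
  simp only [Finset.coe_union, Finset.coe_image, Finset.coe_insert, Finset.coe_singleton,
    mem_union, mem_insert_iff, mem_singleton_iff, mem_image, Finset.mem_coe, not_or,
    not_exists, not_and] at hts
  obtain ⟨⟨⟨h14, h34⟩, hts₁⟩, hts₂⟩ := hts
  rcases lt_or_gt_of_ne h14 with h14 | h14
  · have hf' : C1At f (4 * t + 0) :=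
      hs₁ _ ⟨⟨by linarith, by linarith⟩, fun hmem => hts₁ _ hmem (by ring)⟩
    exact hf'.comp_mul_add.congr (glue_eventuallyEq_left f g h14).symm
  rcases lt_or_gt_of_ne h34 with h34 | h34
  · exact c1At_of_eventuallyEq_const (by simpa using glue_eventuallyEq_mid f g h14 h34)
  · have hg' : C1At g (4 * t + -3) :=
      hs₂ _ ⟨⟨by linarith, by linarith⟩, fun hmem => hts₂ _ hmem (by ring)⟩
    exact hg'.comp_mul_add.congr (glue_eventuallyEq_right f g h34).symm

end Glue

theorem nvec_add_pi (θ : ℝ) : nvec (θ + Real.pi) = (-1 : ℝ) • nvec θ := by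
  simp [nvec, Real.cos_add_pi, Real.sin_add_pi]

theorem nvec_add_sub_of_nvec_eq {a b : ℝ} (h : nvec a = nvec b) (θ : ℝ) :
    nvec (θ + (a - b)) = nvec θ := by
  have hc : Real.cos a = Real.cos b := congrArg Prod.fst h
  have hs : Real.sin a = Real.sin b := congrArg Prod.snd h
  have h1 : Real.cos (a - b) = 1 := by
    rw [Real.cos_sub, hc, hs, ← sq, ← sq, Real.cos_sq_add_sin_sq]
  have h2 : Real.sin (a - b) = 0 := by rw [Real.sin_sub, hc, hs, mul_comm, sub_self]
  simp [nvec, Real.cos_add, Real.sin_add, h1, h2]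

theorem dot_smul_left (c : ℝ) (a b : ℝ × ℝ) : dot (c • a) b = c * dot a b := by
  simp only [dot, Prod.smul_fst, Prod.smul_snd, smul_eq_mul]
  ring

theorem dot_smul_right (c : ℝ) (a b : ℝ × ℝ) : dot a (c • b) = c * dot a b := by
  simp only [dot, Prod.smul_fst, Prod.smul_snd, smul_eq_mul]
  ring

theorem antipode_eq_neg_one_smul (p : Pt) : antipode p = (p.1, (-1 : ℝ) • p.2) := by
  simp [antipode]

theorem antipode_antipode (p : Pt) : antipode (antipode p) = p := by
  simp [antipode]

namespace Curve

def shiftAngle (γ : Curve) (c : ℝ) : Curve := ⟨γ.x, fun t => γ.th t + c⟩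

def reparam (γ : Curve) (a b : ℝ) : Curve :=
  ⟨fun s => γ.x (a * s + b), fun s => γ.th (a * s + b)⟩

def append (γ₁ γ₂ : Curve) : Curve := ⟨glue γ₁.x γ₂.x, glue γ₁.th γ₂.th⟩

def integrand (ξ : ℝ) (C : Pt → ℝ) (γ : Curve) (t : ℝ) : ℝ :=
  C (γ.x t, nvec (γ.th t)) * Real.sqrt (ξ ^ 2 * γ.u1 t ^ 2 + γ.u3 t ^ 2)

def HorizontalAt (γ : Curve) (t : ℝ) : Prop := ∃ c : ℝ, deriv γ.x t = c • nvec (γ.th t)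

def EventuallyEqAt (γ η : Curve) (t : ℝ) : Prop := γ.x =ᶠ[𝓝 t] η.x ∧ γ.th =ᶠ[𝓝 t] η.th

variable {γ η γ₁ γ₂ : Curve} {ξ c σ t : ℝ} {C : Pt → ℝ}

theorem Horizontal.horizontalAt (h : γ.Horizontal) (ht : t ∈ Icc (0 : ℝ) 1) :
    γ.HorizontalAt t := by
  by_cases hd : DifferentiableAt ℝ γ.x t
  · exact h t ht hd
  · exact ⟨0, by rw [deriv_zero_of_not_differentiableAt hd, zero_smul]⟩

theorem EventuallyEqAt.horizontalAt_iff (h : γ.EventuallyEqAt η t) :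
    γ.HorizontalAt t ↔ η.HorizontalAt t := by
  rw [HorizontalAt, HorizontalAt, h.1.deriv_eq, h.2.eq_of_nhds]

theorem EventuallyEqAt.integrand_eq (h : γ.EventuallyEqAt η t) :
    γ.integrand ξ C t = η.integrand ξ C t := by
  simp only [integrand, u1, u3, h.1.eq_of_nhds, h.2.eq_of_nhds, h.1.deriv_eq, h.2.deriv_eq]

theorem HorizontalAt.reparam {a b : ℝ} (h : γ.HorizontalAt (a * t + b)) :
    (γ.reparam a b).HorizontalAt t := by
  obtain ⟨c, hc⟩ := h
  exact ⟨a * c, by simp only [Curve.reparam, deriv_comp_mul_add, hc, smul_smul]⟩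

theorem integrand_reparam {a : ℝ} (ha : 0 ≤ a) (b : ℝ) :
    (γ.reparam a b).integrand ξ C t = a * γ.integrand ξ C (a * t + b) := by
  have hu1 : (γ.reparam a b).u1 t = a * γ.u1 (a * t + b) := by
    simp only [u1, reparam, deriv_comp_mul_add, dot_smul_left]
  have hu3 : (γ.reparam a b).u3 t = a * γ.u3 (a * t + b) := by
    simp only [u3, reparam, deriv_comp_mul_add, smul_eq_mul]
  have hsqrt : ∀ u w : ℝ, Real.sqrt (ξ ^ 2 * (a * u) ^ 2 + (a * w) ^ 2) =
      a * Real.sqrt (ξ ^ 2 * u ^ 2 + w ^ 2) := fun u w => by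
    rw [show ξ ^ 2 * (a * u) ^ 2 + (a * w) ^ 2 = a ^ 2 * (ξ ^ 2 * u ^ 2 + w ^ 2) by ring,
      Real.sqrt_mul (sq_nonneg a), Real.sqrt_sq ha]
  rw [integrand, hu1, hu3, hsqrt, integrand]
  simp only [reparam]
  ring

theorem append_eventuallyEqAt_left (ht : t < 1 / 4) :
    (γ₁.append γ₂).EventuallyEqAt (γ₁.reparam 4 0) t :=
  ⟨glue_eventuallyEq_left _ _ ht, glue_eventuallyEq_left _ _ ht⟩

theorem append_eventuallyEqAt_mid (h1 : 1 / 4 < t) (h2 : t < 3 / 4) :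
    (γ₁.append γ₂).EventuallyEqAt (γ₁.reparam 0 1) t :=
  ⟨glue_eventuallyEq_mid _ _ h1 h2, glue_eventuallyEq_mid _ _ h1 h2⟩

theorem append_eventuallyEqAt_right (ht : 3 / 4 < t) :
    (γ₁.append γ₂).EventuallyEqAt (γ₂.reparam 4 (-3)) t :=
  ⟨glue_eventuallyEq_right _ _ ht, glue_eventuallyEq_right _ _ ht⟩

theorem length_eq_integral_integrand : length ξ C γ = ∫ t in (0 : ℝ)..1, γ.integrand ξ C t :=
  rfl

theorem u1_shiftAngle (hc : ∀ θ, nvec (θ + c) = σ • nvec θ) (t : ℝ) :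
    (γ.shiftAngle c).u1 t = σ * γ.u1 t := by
  simp only [u1, shiftAngle, hc, dot_smul_right]

theorem length_shiftAngle (hc : ∀ θ, nvec (θ + c) = σ • nvec θ) (hσ : σ ^ 2 = 1)
    (hC : ∀ x n, C (x, σ • n) = C (x, n)) :
    length ξ C (γ.shiftAngle c) = length ξ C γ := by
  refine intervalIntegral.integral_congr fun t _ => ?_
  have hu3 : (γ.shiftAngle c).u3 t = γ.u3 t := deriv_add_const _
  simp only [hu3, u1_shiftAngle hc]
  simp only [shiftAngle, hc, hC, mul_pow, hσ, one_mul]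

theorem shiftAngle_mem_Gamma0 (hc : ∀ θ, nvec (θ + c) = σ • nvec θ) (hσ : σ ≠ 0) {a b : Pt}
    (h : γ ∈ Gamma0 a b) :
    γ.shiftAngle c ∈ Gamma0 (a.1, σ • a.2) (b.1, σ • b.2) := by
  obtain ⟨⟨hx, hth⟩, hhor, hx0, hx1, hth0, hth1⟩ := h
  refine ⟨⟨hx, hth.add_const c⟩, fun t ht hd => ?_, hx0, hx1, ?_, ?_⟩
  · obtain ⟨k, hk⟩ := hhor t ht hd
    exact ⟨k / σ, by simp only [shiftAngle, hc, hk, smul_smul, div_mul_cancel₀ k hσ]⟩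
  · simp only [shiftAngle, hc, hth0]
  · simp only [shiftAngle, hc, hth1]

theorem length_shiftAngle_pi (hsym : AntipodallySymmetric C) :
    length ξ C (γ.shiftAngle Real.pi) = length ξ C γ :=
  length_shiftAngle nvec_add_pi (by norm_num) fun x n => by rw [neg_one_smul, ← hsym]

theorem shiftAngle_pi_mem_Gamma0 {a b : Pt} (h : γ ∈ Gamma0 a b) :
    γ.shiftAngle Real.pi ∈ Gamma0 (antipode a) (antipode b) := by
  rw [antipode_eq_neg_one_smul, antipode_eq_neg_one_smul]
  exact shiftAngle_mem_Gamma0 nvec_add_pi (by norm_num) h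

theorem shiftAngle_pi_mem_Gamma0plus {a b : Pt} (h : γ ∈ Gamma0minus a b) :
    γ.shiftAngle Real.pi ∈ Gamma0plus (antipode a) (antipode b) := by
  refine ⟨shiftAngle_pi_mem_Gamma0 h.1, fun t ht hd => ?_⟩
  rw [u1_shiftAngle nvec_add_pi]
  linarith [h.2 t ht hd]

theorem append_mem_Gamma0 {a b c : Pt} (h₁ : γ₁ ∈ Gamma0 a b) (h₂ : γ₂ ∈ Gamma0 b c)
    (hth : γ₁.th 1 = γ₂.th 0) : γ₁.append γ₂ ∈ Gamma0 a c := by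
  obtain ⟨⟨hx₁, hth₁⟩, hhor₁, hx₁0, hx₁1, hth₁0, -⟩ := h₁
  obtain ⟨⟨hx₂, hth₂⟩, hhor₂, hx₂0, hx₂1, -, hth₂1⟩ := h₂
  refine ⟨⟨hx₁.glue hx₂ (hx₁1.trans hx₂0.symm), hth₁.glue hth₂ hth⟩, fun t ⟨ht0, ht1⟩ hd => ?_,
    ?_, ?_, ?_, ?_⟩
  · by_cases hleft : t < 1 / 4
    · exact (append_eventuallyEqAt_left hleft).horizontalAt_iff.2
        (hhor₁.horizontalAt ⟨by linarith, by linarith⟩).reparam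
    by_cases hright : 3 / 4 < t
    · exact (append_eventuallyEqAt_right hright).horizontalAt_iff.2
        (hhor₂.horizontalAt ⟨by linarith, by linarith⟩).reparam
    have hmid : t ∈ Icc (1 / 4 : ℝ) (3 / 4) := ⟨not_lt.1 hleft, not_lt.1 hright⟩
    refine ⟨0, ?_⟩
    rw [zero_smul]
    exact hd.deriv_eq_zero_of_eqOn_const (uniqueDiffOn_Icc (by norm_num) t hmid) hmid
      (glue_eqOn_mid _ _)
  · simp only [append, glue_zero, hx₁0]
  · simp only [append, glue_one, hx₂1]
  · simp only [append, glue_zero, hth₁0]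
  · simp only [append, glue_one, hth₂1]

theorem length_append (hF : IntervalIntegrable ((γ₁.append γ₂).integrand ξ C) volume 0 1) :
    length ξ C (γ₁.append γ₂) = length ξ C γ₁ + length ξ C γ₂ := by
  set F := (γ₁.append γ₂).integrand ξ C
  have hleft : ∫ t in (0 : ℝ)..1 / 4, F t = length ξ C γ₁ := by
    rw [intervalIntegral.integral_congr_Ioo_of_le (by norm_num) fun t ht =>
      (append_eventuallyEqAt_left ht.2).integrand_eq.trans (integrand_reparam (by norm_num) 0),
      intervalIntegral.integral_const_mul, intervalIntegral.integral_comp_mul_add _ (by norm_num)]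
    rw [length_eq_integral_integrand]
    norm_num
    ring
  have hmid : ∫ t in (1 / 4 : ℝ)..3 / 4, F t = 0 := by
    rw [intervalIntegral.integral_congr_Ioo_of_le (by norm_num) fun t ht =>
      (append_eventuallyEqAt_mid ht.1 ht.2).integrand_eq.trans (integrand_reparam le_rfl 1)]
    simp
  have hright : ∫ t in (3 / 4 : ℝ)..1, F t = length ξ C γ₂ := by
    rw [intervalIntegral.integral_congr_Ioo_of_le (by norm_num) fun t ht =>
      (append_eventuallyEqAt_right ht.1).integrand_eq.trans (integrand_reparam (by norm_num) _),
      intervalIntegral.integral_const_mul, intervalIntegral.integral_comp_mul_add _ (by norm_num)]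
    rw [length_eq_integral_integrand]
    norm_num
    ring
  have hF₁ : IntervalIntegrable F volume 0 (1 / 4) := hF.mono_set (by
    rw [uIcc_of_le (by norm_num), uIcc_of_le (by norm_num)]
    exact Icc_subset_Icc le_rfl (by norm_num))
  have hF₂ : IntervalIntegrable F volume (1 / 4) (3 / 4) := hF.mono_set (by
    rw [uIcc_of_le (by norm_num), uIcc_of_le (by norm_num)]
    exact Icc_subset_Icc (by norm_num) (by norm_num))
  have hF₃ : IntervalIntegrable F volume (3 / 4) 1 := hF.mono_set (by
    rw [uIcc_of_le (by norm_num), uIcc_of_le (by norm_num)]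
    exact Icc_subset_Icc (by norm_num) le_rfl)
  rw [length_eq_integral_integrand, ← intervalIntegral.integral_add_adjacent_intervals hF₁
    (hF₂.trans hF₃), ← intervalIntegral.integral_add_adjacent_intervals hF₂ hF₃, hleft, hmid,
    hright, zero_add]

theorem ofReal_length_append_le :
    ENNReal.ofReal (length ξ C (γ₁.append γ₂)) ≤
      ENNReal.ofReal (length ξ C γ₁) + ENNReal.ofReal (length ξ C γ₂) := by
  by_cases hF : IntervalIntegrable ((γ₁.append γ₂).integrand ξ C) volume 0 1
  · rw [length_append hF]
    exact ENNReal.ofReal_add_le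
  · rw [length_eq_integral_integrand, intervalIntegral.integral_undef hF, ENNReal.ofReal_zero]
    exact zero_le

end Curve

theorem antipode_mem_pair {p q : Pt} (h : q ∈ ({p, antipode p} : Set Pt)) :
    antipode q ∈ ({p, antipode p} : Set Pt) := by
  rcases h with rfl | rfl
  · exact Or.inr rfl
  · exact Or.inl (antipode_antipode p)

/-- By definition `dc ξ C = minOverReps (dF0plus ξ C)` and `dproj ξ C = minOverReps (dF0 ξ C)`. -/
def minOverReps (d : Pt → Pt → ℝ≥0∞) (p₀ p₁ : Pt) : ℝ≥0∞ :=
  min (min (d p₀ p₁) (d p₀ (antipode p₁)))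
    (min (d (antipode p₀) p₁) (d (antipode p₀) (antipode p₁)))

section MinOverReps

variable {d d' : Pt → Pt → ℝ≥0∞} {p₀ p₁ q₀ q₁ : Pt}

theorem minOverReps_le (h₀ : q₀ ∈ ({p₀, antipode p₀} : Set Pt))
    (h₁ : q₁ ∈ ({p₁, antipode p₁} : Set Pt)) : minOverReps d p₀ p₁ ≤ d q₀ q₁ := by
  rcases h₀ with rfl | rfl <;> rcases h₁ with rfl | rfl <;> simp [minOverReps]

theorem exists_eq_minOverReps (d : Pt → Pt → ℝ≥0∞) (p₀ p₁ : Pt) :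
    ∃ q₀ ∈ ({p₀, antipode p₀} : Set Pt), ∃ q₁ ∈ ({p₁, antipode p₁} : Set Pt),
      d q₀ q₁ = minOverReps d p₀ p₁ := by
  simp only [minOverReps, min_def]
  split_ifs <;> exact ⟨_, by simp, _, by simp, rfl⟩

theorem minOverReps_mono (h : ∀ a b, d a b ≤ d' a b) (p₀ p₁ : Pt) :
    minOverReps d p₀ p₁ ≤ minOverReps d' p₀ p₁ :=
  min_le_min (min_le_min (h _ _) (h _ _)) (min_le_min (h _ _) (h _ _))

theorem minOverReps_triangle (htri : ∀ a b c, d a c ≤ d a b + d b c)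
    (hanti : ∀ a b, d (antipode a) (antipode b) ≤ d a b) (p₀ p₁ p₂ : Pt) :
    minOverReps d p₀ p₁ ≤ minOverReps d p₀ p₂ + minOverReps d p₂ p₁ := by
  obtain ⟨q₀, hq₀, q₂, hq₂, h₀₂⟩ := exists_eq_minOverReps d p₀ p₂
  obtain ⟨r₂, hr₂, q₁, hq₁, h₂₁⟩ := exists_eq_minOverReps d p₂ p₁
  rw [← h₀₂, ← h₂₁]
  have hr : r₂ = q₂ ∨ r₂ = antipode q₂ := by
    rcases hq₂ with rfl | rfl <;> rcases hr₂ with rfl | rfl <;> simp [antipode_antipode]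
  rcases hr with rfl | rfl
  · exact (minOverReps_le hq₀ hq₁).trans (htri _ _ _)
  · calc minOverReps d p₀ p₁ ≤ d q₀ (antipode q₁) := minOverReps_le hq₀ (antipode_mem_pair hq₁)
      _ ≤ d q₀ q₂ + d q₂ (antipode q₁) := htri _ _ _
      _ ≤ d q₀ q₂ + d (antipode q₂) q₁ := by
        gcongr
        simpa only [antipode_antipode] using hanti (antipode q₂) q₁

end MinOverReps

section Distances

variable {ξ : ℝ} {C : Pt → ℝ} {γ : Curve} {a b : Pt}

theorem dF0_le_ofReal_length (h : γ ∈ Gamma0 a b) :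
    dF0 ξ C a b ≤ ENNReal.ofReal (length ξ C γ) :=
  iInf₂_le γ h

theorem dF0plus_le_ofReal_length (h : γ ∈ Gamma0plus a b) :
    dF0plus ξ C a b ≤ ENNReal.ofReal (length ξ C γ) :=
  iInf₂_le γ h

theorem dF0_le_dF0plus (a b : Pt) : dF0 ξ C a b ≤ dF0plus ξ C a b :=
  biInf_mono fun _ h => h.1

theorem dF0_antipode_le (hsym : AntipodallySymmetric C) (a b : Pt) :
    dF0 ξ C (antipode a) (antipode b) ≤ dF0 ξ C a b :=
  le_iInf₂ fun γ hγ => (dF0_le_ofReal_length (γ.shiftAngle_pi_mem_Gamma0 hγ)).trans_eq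
    (by rw [γ.length_shiftAngle_pi hsym])

theorem dF0_triangle (a b c : Pt) : dF0 ξ C a c ≤ dF0 ξ C a b + dF0 ξ C b c := by
  refine ENNReal.le_iInf₂_add_iInf₂ fun γ₁ h₁ γ₂ h₂ => ?_
  -- Rotate `γ₂` by a multiple of `2π` so that its angle starts where that of `γ₁` ends.
  have hshift : ∀ θ, nvec (θ + (γ₁.th 1 - γ₂.th 0)) = (1 : ℝ) • nvec θ := by
    simpa using nvec_add_sub_of_nvec_eq (h₁.2.2.2.2.2.trans h₂.2.2.2.2.1.symm)
  have h₂' : γ₂.shiftAngle (γ₁.th 1 - γ₂.th 0) ∈ Gamma0 b c := by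
    simpa using γ₂.shiftAngle_mem_Gamma0 hshift one_ne_zero h₂
  calc dF0 ξ C a c
      ≤ ENNReal.ofReal (length ξ C (γ₁.append (γ₂.shiftAngle (γ₁.th 1 - γ₂.th 0)))) :=
        dF0_le_ofReal_length (γ₁.append_mem_Gamma0 h₁ h₂' (by simp [Curve.shiftAngle]))
    _ ≤ ENNReal.ofReal (length ξ C γ₁) +
          ENNReal.ofReal (length ξ C (γ₂.shiftAngle (γ₁.th 1 - γ₂.th 0))) :=
        Curve.ofReal_length_append_le
    _ = ENNReal.ofReal (length ξ C γ₁) + ENNReal.ofReal (length ξ C γ₂) := by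
        rw [γ₂.length_shiftAngle hshift (one_pow 2) (by simp)]

theorem dc_le_ofReal_length (hsym : AntipodallySymmetric C) {p₀ p₁ q₀ q₁ : Pt}
    (h₀ : q₀ ∈ ({p₀, antipode p₀} : Set Pt)) (h₁ : q₁ ∈ ({p₁, antipode p₁} : Set Pt))
    (hγ : γ ∈ Gamma0plus q₀ q₁ ∪ Gamma0minus q₀ q₁) :
    dc ξ C p₀ p₁ ≤ ENNReal.ofReal (length ξ C γ) := by
  rcases hγ with hγ | hγ
  · exact (minOverReps_le h₀ h₁).trans (dF0plus_le_ofReal_length hγ)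
  · calc dc ξ C p₀ p₁ ≤ dF0plus ξ C (antipode q₀) (antipode q₁) :=
          minOverReps_le (antipode_mem_pair h₀) (antipode_mem_pair h₁)
      _ ≤ ENNReal.ofReal (length ξ C (γ.shiftAngle Real.pi)) :=
          dF0plus_le_ofReal_length (γ.shiftAngle_pi_mem_Gamma0plus hγ)
      _ = ENNReal.ofReal (length ξ C γ) := by rw [γ.length_shiftAngle_pi hsym]

end Distances

theorem dc_triangle_of_cuspfree_minimizer_general (ξ : ℝ) (C : Pt → ℝ)
    (hsym : AntipodallySymmetric C) (p₀ p₁ : Pt)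
    (hmin : ∃ q₀ ∈ ({p₀, antipode p₀} : Set Pt), ∃ q₁ ∈ ({p₁, antipode p₁} : Set Pt),
      ∃ γ ∈ Gamma0plus q₀ q₁ ∪ Gamma0minus q₀ q₁,
        ENNReal.ofReal (length ξ C γ) = dproj ξ C p₀ p₁) :
    ∀ p₂ : Pt, dc ξ C p₀ p₁ ≤ dc ξ C p₀ p₂ + dc ξ C p₂ p₁ := by
  intro p₂
  obtain ⟨q₀, hq₀, q₁, hq₁, γ, hγ, hlen⟩ := hmin
  calc dc ξ C p₀ p₁ ≤ dproj ξ C p₀ p₁ := hlen ▸ dc_le_ofReal_length hsym hq₀ hq₁ hγ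
    _ ≤ dproj ξ C p₀ p₂ + dproj ξ C p₂ p₁ :=
        minOverReps_triangle dF0_triangle (dF0_antipode_le hsym) p₀ p₁ p₂
    _ ≤ dc ξ C p₀ p₂ + dc ξ C p₂ p₁ :=
        add_le_add (minOverReps_mono dF0_le_dF0plus _ _) (minOverReps_mono dF0_le_dF0plus _ _)

/-- triangle inequality for `d_c` at cusp-free-reachable endpoints. -/
theorem dc_triangle_of_cuspfree_minimizer (ξ δ : ℝ) (hξ : 0 < ξ) (hδ : 0 < δ)
    (C : Pt → ℝ) (hC : Continuous C) (hCδ : ∀ q, δ ≤ C q)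
    (hsym : AntipodallySymmetric C) (p₀ p₁ : Pt)
    (hmin : ∃ q₀ ∈ ({p₀, antipode p₀} : Set Pt), ∃ q₁ ∈ ({p₁, antipode p₁} : Set Pt),
      ∃ γ ∈ Gamma0plus q₀ q₁ ∪ Gamma0minus q₀ q₁,
        ENNReal.ofReal (length ξ C γ) = dproj ξ C p₀ p₁) :
    ∀ p₂ : Pt, dc ξ C p₀ p₁ ≤ dc ξ C p₀ p₂ + dc ξ C p₂ p₁ :=
  dc_triangle_of_cuspfree_minimizer_general ξ C hsym p₀ p₁ hmin
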